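/- arXiv:2002.04086 — 4 statements merged into one kernel-verified Lean document; each statement's English description precedes it below -/
import Mathlib

section
/- Let the under-approximating sets be defined by Λ₀ᴺ = X₀ and Λᵢᴺ = φ(tᵢ, tᵢ₋₁)Λᵢ₋₁ᴺ + Wᵢ for i = 1,…,N, where tᵢ = t̲ + i(t̄ − t̲)/N and Wᵢ = (∫_{tᵢ₋₁}^{tᵢ} φ(tᵢ,s)B(s)ds)·U. Then Λᵢᴺ ⊆ R(tᵢ) for all i ∈ {0,…,N}. -/
/-!
The integral equation for `φ` is written with Bochner integrals, which vanish on non-integrable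
integrands, so by itself it does not make `φ(·,a)` continuous. It does force `φ(t,a) = 1`
wherever `A(·)φ(·,a)` fails to be integrable on `[a,t]`; where it is integrable, `φ(·,a)` is
continuous, and if `∫ₐᵇ ‖A‖ ≤ 1/2` the equation bounds it by `2`. Hence `A(·)φ(·,a)` is
integrable on intervals of small `A`-mass, and by the semigroup law on all of `[t̲, t̄]`; so `φ`
is continuous in both variables and every integral in sight exists. Then `Λᵢ ⊆ R(tᵢ)` by
induction on `i`: the point `φ(tᵢ,tᵢ₋₁) y + Wᵢ u₀` is reached by following a control for `y` up
to `tᵢ₋₁` and the constant control `u₀` afterwards.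
-/

open MeasureTheory intervalIntegral Pointwise ENNReal

/-- The reachable set at time `t` of `ẋ = A(t)x + B(t)u(t)` (with transition matrix `φ`),
from initial time `tl`, initial set `X₀`, and measurable inputs valued in `U`. -/
noncomputable def reachSet {n m : ℕ} (tl : ℝ)
    (φ : ℝ → ℝ → EuclideanSpace ℝ (Fin n) →L[ℝ] EuclideanSpace ℝ (Fin n))
    (B : ℝ → EuclideanSpace ℝ (Fin m) →L[ℝ] EuclideanSpace ℝ (Fin n))
    (X₀ : Set (EuclideanSpace ℝ (Fin n))) (U : Set (EuclideanSpace ℝ (Fin m)))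
    (t : ℝ) : Set (EuclideanSpace ℝ (Fin n)) :=
  {x | ∃ x₀ ∈ X₀, ∃ u : ℝ → EuclideanSpace ℝ (Fin m), Measurable u ∧ (∀ s, u s ∈ U) ∧
    x = φ t tl x₀ + ∫ s in tl..t, φ t s (B s (u s))}

open Set

theorem MeasureTheory.IntegrableOn.intervalIntegrable_of_mem {E : Type*} [NormedAddCommGroup E]
    {f : ℝ → E} {a b c d : ℝ} (hf : IntegrableOn f (Icc a b)) (hc : c ∈ Icc a b)
    (hd : d ∈ Icc a b) : IntervalIntegrable f volume c d :=
  (hf.mono_set (uIcc_subset_Icc hc hd)).intervalIntegrable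

section Transition

variable {E : Type*} [NormedAddCommGroup E] [NormedSpace ℝ E]
  {A : ℝ → E →L[ℝ] E} {φ : ℝ → ℝ → E →L[ℝ] E} {a b : ℝ}

/-- Integral form of `∂ₜφ(t,s) = A(t) φ(t,s)`, `φ(s,s) = 1`, the equation defining the
transition matrix of `ẋ = A(t) x`. -/
def IsTransitionOn (A : ℝ → E →L[ℝ] E) (φ : ℝ → ℝ → E →L[ℝ] E) (I : Set ℝ) : Prop :=
  ∀ s ∈ I, ∀ t ∈ I,
    φ t s = ContinuousLinearMap.id ℝ E + ∫ z in s..t, (A z).comp (φ z s)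

namespace IsTransitionOn

theorem mono {I J : Set ℝ} (h : IsTransitionOn A φ I) (hJ : J ⊆ I) : IsTransitionOn A φ J :=
  fun s hs t ht => h s (hJ hs) t (hJ ht)

theorem apply_self {I : Set ℝ} (h : IsTransitionOn A φ I) {s : ℝ} (hs : s ∈ I) :
    φ s s = ContinuousLinearMap.id ℝ E := by
  rw [h s hs s hs, integral_same, add_zero]

theorem eq_id_of_not_intervalIntegrable (h : IsTransitionOn A φ (Icc a b)) {t : ℝ}
    (ht : t ∈ Icc a b) (hg : ¬IntervalIntegrable (fun z => (A z).comp (φ z a)) volume a t) :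
    φ t a = ContinuousLinearMap.id ℝ E := by
  rw [h a (left_mem_Icc.2 (ht.1.trans ht.2)) t ht, integral_undef hg, add_zero]

theorem continuousOn_of_intervalIntegrable (h : IsTransitionOn A φ (Icc a b)) {t : ℝ}
    (ht : t ∈ Icc a b) (hg : IntervalIntegrable (fun z => (A z).comp (φ z a)) volume a t) :
    ContinuousOn (φ · a) (Icc a t) := by
  have hprim := continuousOn_primitive_interval' hg left_mem_uIcc
  rw [uIcc_of_le ht.1] at hprim
  refine ((continuousOn_const (c := ContinuousLinearMap.id ℝ E)).add hprim).congr fun x hx => ?_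
  exact h a (left_mem_Icc.2 (ht.1.trans ht.2)) x ⟨hx.1, hx.2.trans ht.2⟩

/-- The maximum `C` of `‖φ(·,a)‖` on `[a,t]` satisfies `C ≤ 1 + C/2`. -/
theorem norm_le_two_of_intervalIntegrable (h : IsTransitionOn A φ (Icc a b))
    (hA : IntegrableOn A (Icc a b)) (hmass : ∫ z in a..b, ‖A z‖ ≤ 1 / 2) {t : ℝ}
    (ht : t ∈ Icc a b) (hg : IntervalIntegrable (fun z => (A z).comp (φ z a)) volume a t) :
    ∀ x ∈ Icc a t, ‖φ x a‖ ≤ 2 := by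
  obtain ⟨x₀, hx₀, hmax⟩ := isCompact_Icc.exists_isMaxOn (nonempty_Icc.2 ht.1)
    (h.continuousOn_of_intervalIntegrable ht hg).norm
  set C := ‖φ x₀ a‖
  suffices C ≤ 2 from fun x hx => (hmax hx).trans this
  have ha : a ∈ Icc a b := left_mem_Icc.2 (ht.1.trans ht.2)
  have hx₀b : x₀ ∈ Icc a b := ⟨hx₀.1, hx₀.2.trans ht.2⟩
  have hAn : IntegrableOn (fun z => ‖A z‖) (Icc a b) := hA.norm
  have hbound : ∀ z ∈ Ioc a x₀, ‖(A z).comp (φ z a)‖ ≤ ‖A z‖ * C := fun z hz =>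
    ((A z).opNorm_comp_le _).trans <|
      mul_le_mul_of_nonneg_left (hmax ⟨hz.1.le, hz.2.trans hx₀.2⟩) (norm_nonneg _)
  have hmass_x₀ : ∫ z in a..x₀, ‖A z‖ ≤ 1 / 2 :=
    (integral_mono_interval le_rfl hx₀.1 hx₀b.2 (.of_forall fun z => norm_nonneg (A z))
      (hAn.intervalIntegrable_of_mem ha (right_mem_Icc.2 (ht.1.trans ht.2)))).trans hmass
  have : C ≤ 1 + 1 / 2 * C :=
    calc C = ‖ContinuousLinearMap.id ℝ E + ∫ z in a..x₀, (A z).comp (φ z a)‖ := by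
          rw [← h a ha x₀ hx₀b]
      _ ≤ 1 + ∫ z in a..x₀, ‖A z‖ * C :=
          (norm_add_le _ _).trans <| add_le_add ContinuousLinearMap.norm_id_le <|
            norm_integral_le_of_norm_le hx₀.1 (.of_forall hbound)
              ((hAn.intervalIntegrable_of_mem ha hx₀b).mul_const C)
      _ ≤ 1 + 1 / 2 * C := by
          rw [intervalIntegral.integral_mul_const]
          gcongr
  linarith

theorem norm_le_two (h : IsTransitionOn A φ (Icc a b)) (hA : IntegrableOn A (Icc a b))
    (hmass : ∫ z in a..b, ‖A z‖ ≤ 1 / 2) : ∀ x ∈ Icc a b, ‖φ x a‖ ≤ 2 := by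
  intro x hx
  by_cases hg : IntervalIntegrable (fun z => (A z).comp (φ z a)) volume a x
  · exact h.norm_le_two_of_intervalIntegrable hA hmass hx hg x ⟨hx.1, le_rfl⟩
  · rw [h.eq_id_of_not_intervalIntegrable hx hg]
    exact ContinuousLinearMap.norm_id_le.trans one_le_two

/-- The points `t` up to which `A(·)φ(·,a)` is integrable form an interval `G`; on `G` the
map `φ(·,a)` is continuous, and off `G` it is constantly `1`. -/
theorem aestronglyMeasurable (h : IsTransitionOn A φ (Icc a b)) :
    AEStronglyMeasurable (φ · a) (volume.restrict (Icc a b)) := by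
  set G := {t ∈ Icc a b | IntervalIntegrable (fun z => (A z).comp (φ z a)) volume a t}
  have hG : G.OrdConnected := by
    refine ⟨fun x hx y hy z hz => ⟨⟨hx.1.1.trans hz.1, hz.2.trans hy.1.2⟩, ?_⟩⟩
    refine hy.2.mono_set ?_
    rw [uIcc_of_le (hx.1.1.trans hz.1), uIcc_of_le hy.1.1]
    exact Icc_subset_Icc_right hz.2
  have hcont_G : ContinuousOn (φ · a) G := by
    intro x hx
    by_cases hy : ∃ y ∈ G, x < y
    · obtain ⟨y, hyG, hxy⟩ := hy
      refine (h.continuousOn_of_intervalIntegrable hyG.1 hyG.2 x ⟨hx.1.1, hxy.le⟩)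
        |>.mono_of_mem_nhdsWithin ?_
      exact mem_nhdsWithin.2 ⟨Iio y, isOpen_Iio, hxy, fun z hz => ⟨hz.2.1.1, hz.1.le⟩⟩
    · push Not at hy
      exact (h.continuousOn_of_intervalIntegrable hx.1 hx.2).mono
        (fun z hz => ⟨hz.1.1, hy z hz⟩) x hx
  have hcont_compl : ContinuousOn (φ · a) (Icc a b \ G) :=
    (continuousOn_const (c := ContinuousLinearMap.id ℝ E)).congr fun x hx =>
      h.eq_id_of_not_intervalIntegrable hx.1 fun hg => hx.2 ⟨hx.1, hg⟩
  have hGm : MeasurableSet G := hG.measurableSet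
  rw [← union_sdiff_cancel (sep_subset (Icc a b) _), aestronglyMeasurable_union_iff]
  exact ⟨hcont_G.aestronglyMeasurable hGm,
    hcont_compl.aestronglyMeasurable (measurableSet_Icc.diff hGm)⟩

theorem intervalIntegrable_of_integral_norm_le (h : IsTransitionOn A φ (Icc a b))
    (hA : IntegrableOn A (Icc a b)) (hab : a ≤ b) (hmass : ∫ z in a..b, ‖A z‖ ≤ 1 / 2) :
    IntervalIntegrable (fun z => (A z).comp (φ z a)) volume a b := by
  refine (intervalIntegrable_iff_integrableOn_Icc_of_le hab).2 <|
    Integrable.mono' (hA.norm.mul_const 2)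
      (hA.aestronglyMeasurable.mul h.aestronglyMeasurable) ?_
  refine (ae_restrict_iff' measurableSet_Icc).2 (.of_forall fun z hz => ?_)
  exact ((A z).opNorm_comp_le _).trans
    (mul_le_mul_of_nonneg_left (h.norm_le_two hA hmass z hz) (norm_nonneg _))

/-- Induction on the number of halves in `∫ₐᵇ ‖A‖`: split `[a,b]` at the point `e` where
`∫ₐᵉ ‖A‖ = 1/2`, and transport integrability from `φ(·,e)` to `φ(·,a) = φ(·,e) φ(e,a)`. -/
theorem intervalIntegrable (h : IsTransitionOn A φ (Icc a b))
    (hφ : ∀ t z s : ℝ, (φ t z).comp (φ z s) = φ t s) (hA : IntegrableOn A (Icc a b))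
    (hab : a ≤ b) : IntervalIntegrable (fun z => (A z).comp (φ z a)) volume a b := by
  obtain ⟨k, hk⟩ := exists_nat_ge (2 * ∫ z in a..b, ‖A z‖)
  induction k generalizing a with
  | zero =>
    exact h.intervalIntegrable_of_integral_norm_le hA hab (by push_cast at hk; linarith)
  | succ k ih =>
    by_cases hsmall : ∫ z in a..b, ‖A z‖ ≤ 1 / 2
    · exact h.intervalIntegrable_of_integral_norm_le hA hab hsmall
    have hAn : IntegrableOn (fun z => ‖A z‖) (Icc a b) := hA.norm
    have ha : a ∈ Icc a b := left_mem_Icc.2 hab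
    have hcont : ContinuousOn (fun e => ∫ z in a..e, ‖A z‖) (Icc a b) := by
      simpa only [uIcc_of_le hab] using
        continuousOn_primitive_interval (hAn.mono_set (uIcc_subset_Icc ha (right_mem_Icc.2 hab)))
    obtain ⟨e, he, hmass_ae : ∫ z in a..e, ‖A z‖ = 1 / 2⟩ := intermediate_value_Icc hab hcont
      (show (1 / 2 : ℝ) ∈ Icc (∫ z in a..a, ‖A z‖) (∫ z in a..b, ‖A z‖) by
        rw [integral_same]; constructor <;> linarith)
    have hint_ae : IntervalIntegrable (fun z => (A z).comp (φ z a)) volume a e :=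
      (h.mono (Icc_subset_Icc_right he.2)).intervalIntegrable_of_integral_norm_le
        (hA.mono_set (Icc_subset_Icc_right he.2)) he.1 hmass_ae.le
    have hint_eb : IntervalIntegrable (fun z => (A z).comp (φ z e)) volume e b := by
      refine ih (h.mono (Icc_subset_Icc_left he.1)) (hA.mono_set (Icc_subset_Icc_left he.1))
        he.2 ?_
      rw [← integral_interval_sub_left (hAn.intervalIntegrable_of_mem ha (right_mem_Icc.2 hab))
        (hAn.intervalIntegrable_of_mem ha he), hmass_ae]
      push_cast at hk
      linarith
    refine hint_ae.trans ((hint_eb.mul_const (φ e a)).congr fun z _ => ?_)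
    change ((A z).comp (φ z e)).comp (φ e a) = (A z).comp (φ z a)
    rw [ContinuousLinearMap.comp_assoc, hφ]

theorem continuousOn_left (h : IsTransitionOn A φ (Icc a b))
    (hφ : ∀ t z s : ℝ, (φ t z).comp (φ z s) = φ t s) (hA : IntegrableOn A (Icc a b))
    (hab : a ≤ b) : ContinuousOn (φ · a) (Icc a b) :=
  h.continuousOn_of_intervalIntegrable (right_mem_Icc.2 hab) (h.intervalIntegrable hφ hA hab)

/-- `φ(t,s) = φ(t,a) φ(s,a)⁻¹`, and inversion is continuous on the units of `E →L[ℝ] E`. -/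
theorem continuousOn_right [CompleteSpace E] (h : IsTransitionOn A φ (Icc a b))
    (hφ : ∀ t z s : ℝ, (φ t z).comp (φ z s) = φ t s) (hA : IntegrableOn A (Icc a b))
    (hab : a ≤ b) (t : ℝ) : ContinuousOn (φ t) (Icc a b) := by
  let unit (s : ℝ) (hs : s ∈ Icc a b) : (E →L[ℝ] E)ˣ :=
    ⟨φ s a, φ a s, (hφ s a s).trans (h.apply_self hs),
      (hφ a s a).trans (h.apply_self (left_mem_Icc.2 hab))⟩
  have hinv : ContinuousOn (fun s => Ring.inverse (φ s a)) (Icc a b) := fun s hs =>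
    (NormedRing.inverse_continuousAt (unit s hs)).comp_continuousWithinAt (f := (φ · a))
      (h.continuousOn_left hφ hA hab s hs)
  refine ((continuousOn_const (c := φ t a)).mul hinv).congr fun s hs => ?_
  change φ t s = (φ t a).comp (Ring.inverse (φ s a))
  rw [show Ring.inverse (φ s a) = φ a s from Ring.inverse_unit (unit s hs), hφ]

end IsTransitionOn

end Transition

theorem ContinuousOn.integrableOn_clm_comp {E F G : Type*} [NormedAddCommGroup E]
    [NormedSpace ℝ E] [NormedAddCommGroup F] [NormedSpace ℝ F] [NormedAddCommGroup G]
    [NormedSpace ℝ G] {M : ℝ → E →L[ℝ] G} {B : ℝ → F →L[ℝ] E} {a b : ℝ}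
    (hM : ContinuousOn M (Icc a b)) (hB : IntegrableOn B (Icc a b)) :
    IntegrableOn (fun s => (M s).comp (B s)) (Icc a b) := by
  obtain ⟨C, hC⟩ := isCompact_Icc.exists_bound_of_continuousOn hM
  exact (ContinuousLinearMap.compL ℝ F E G).integrable_of_bilin_of_bdd_left C
    (hM.aestronglyMeasurable measurableSet_Icc)
    ((ae_restrict_iff' measurableSet_Icc).2 (.of_forall hC)) hB

section Reachability

variable {n m : ℕ} {tl tu : ℝ}
  {φ : ℝ → ℝ → EuclideanSpace ℝ (Fin n) →L[ℝ] EuclideanSpace ℝ (Fin n)}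
  {B : ℝ → EuclideanSpace ℝ (Fin m) →L[ℝ] EuclideanSpace ℝ (Fin n)}
  {X₀ : Set (EuclideanSpace ℝ (Fin n))} {U : Set (EuclideanSpace ℝ (Fin m))}

theorem subset_reachSet_self (hφ : φ tl tl = ContinuousLinearMap.id ℝ _) (hU : U.Nonempty) :
    X₀ ⊆ reachSet tl φ B X₀ U tl := fun x hx =>
  ⟨x, hx, fun _ => hU.some, measurable_const, fun _ => hU.some_mem, by simp [hφ]⟩

theorem transition_add_mem_reachSet (hφ : ∀ t z s : ℝ, (φ t z).comp (φ z s) = φ t s)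
    (hφc : ∀ t, ContinuousOn (φ t) (Icc tl tu)) (hB : IntegrableOn B (Icc tl tu))
    (hU : Bornology.IsBounded U) {c d : ℝ} (hc : c ∈ Icc tl tu) (hd : d ∈ Icc tl tu)
    (hcd : c ≤ d) {y : EuclideanSpace ℝ (Fin n)} (hy : y ∈ reachSet tl φ B X₀ U c)
    {u₀ : EuclideanSpace ℝ (Fin m)} (hu₀ : u₀ ∈ U) :
    φ d c y + (∫ s in c..d, (φ d s).comp (B s)) u₀ ∈ reachSet tl φ B X₀ U d := by
  obtain ⟨x₀, hx₀, u, hu, huU, rfl⟩ := hy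
  obtain ⟨C, hC⟩ := hU.exists_norm_le
  have hint (t : ℝ) (w : ℝ → EuclideanSpace ℝ (Fin m)) (hw : Measurable w)
      (hwU : ∀ s, w s ∈ U) : IntegrableOn (fun s => φ t s (B s (w s))) (Icc tl tu) :=
    (ContinuousLinearMap.id ℝ (EuclideanSpace ℝ (Fin m) →L[ℝ] EuclideanSpace ℝ (Fin n)))
      |>.integrable_of_bilin_of_bdd_right C ((hφc t).integrableOn_clm_comp hB)
        hw.aestronglyMeasurable (.of_forall fun s => hC _ (hwU s))
  set v : ℝ → EuclideanSpace ℝ (Fin m) := fun s => if s ≤ c then u s else u₀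
  have hv : Measurable v := Measurable.ite measurableSet_Iic hu measurable_const
  have hvU : ∀ s, v s ∈ U := fun s => by
    by_cases hs : s ≤ c
    · simpa [v, hs] using huU s
    · simpa [v, hs] using hu₀
  have htl : tl ∈ Icc tl tu := left_mem_Icc.2 (hc.1.trans hc.2)
  have hbefore : ∫ s in tl..c, φ d s (B s (v s)) = φ d c (∫ s in tl..c, φ c s (B s (u s))) := by
    rw [← (φ d c).intervalIntegral_comp_comm ((hint c u hu huU).intervalIntegrable_of_mem htl hc)]
    refine integral_congr fun s hs => ?_
    rw [uIcc_of_le hc.1] at hs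
    simp only [v, if_pos hs.2, ← hφ d c s, ContinuousLinearMap.comp_apply]
  have hafter : ∫ s in c..d, φ d s (B s (v s)) = (∫ s in c..d, (φ d s).comp (B s)) u₀ := by
    rw [ContinuousLinearMap.intervalIntegral_apply
      (((hφc d).integrableOn_clm_comp hB).intervalIntegrable_of_mem hc hd)]
    refine integral_congr_ae (.of_forall fun s hs => ?_)
    rw [uIoc_of_le hcd] at hs
    simp only [v, if_neg (not_le.2 hs.1), ContinuousLinearMap.comp_apply]
  refine ⟨x₀, hx₀, v, hv, hvU, ?_⟩
  rw [← integral_add_adjacent_intervals ((hint d v hv hvU).intervalIntegrable_of_mem htl hc)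
    ((hint d v hv hvU).intervalIntegrable_of_mem hc hd), hbefore, hafter, map_add,
    ← ContinuousLinearMap.comp_apply, hφ]
  abel

end Reachability

theorem grid_mem_Icc {a b : ℝ} (hab : a ≤ b) {N i : ℕ} (hi : i ≤ N) :
    a + i * (b - a) / N ∈ Icc a b := by
  have hiN : (i : ℝ) / N ≤ 1 := div_le_one_of_le₀ (by exact_mod_cast hi) (Nat.cast_nonneg N)
  have hi0 : 0 ≤ (i : ℝ) / N := div_nonneg (Nat.cast_nonneg i) (Nat.cast_nonneg N)
  rw [mul_comm, mul_div_assoc]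
  constructor <;> nlinarith

theorem grid_monotone {a b : ℝ} (hab : a ≤ b) (N : ℕ) :
    Monotone fun i : ℕ => a + i * (b - a) / N := fun i j hij => by
  have : (i : ℝ) * (b - a) ≤ j * (b - a) :=
    mul_le_mul_of_nonneg_right (by exact_mod_cast hij) (sub_nonneg.2 hab)
  dsimp only
  gcongr

theorem iterates_subset_reachable_general {n m : ℕ} (tl tu : ℝ) (hle : tl ≤ tu)
    (A : ℝ → EuclideanSpace ℝ (Fin n) →L[ℝ] EuclideanSpace ℝ (Fin n))
    (hA : IntegrableOn A (Set.Icc tl tu))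
    (B : ℝ → EuclideanSpace ℝ (Fin m) →L[ℝ] EuclideanSpace ℝ (Fin n))
    (p : ℝ≥0∞) (hp : 1 < p)
    (hBp : MemLp B p (volume.restrict (Set.Icc tl tu)))
    (X₀ : Set (EuclideanSpace ℝ (Fin n))) (U : Set (EuclideanSpace ℝ (Fin m)))
    (hUne : U.Nonempty) (hUcp : IsCompact U)
    (φ : ℝ → ℝ → EuclideanSpace ℝ (Fin n) →L[ℝ] EuclideanSpace ℝ (Fin n))
    (hφsg : ∀ t z s : ℝ, (φ t z).comp (φ z s) = φ t s)
    (hφ : ∀ s ∈ Set.Icc tl tu, ∀ t ∈ Set.Icc tl tu,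
      φ t s = ContinuousLinearMap.id ℝ (EuclideanSpace ℝ (Fin n))
        + ∫ z in s..t, (A z).comp (φ z s))
    (N : ℕ)
    (ti : ℕ → ℝ) (hti : ∀ i : ℕ, ti i = tl + i * (tu - tl) / N)
    (Λ : ℕ → Set (EuclideanSpace ℝ (Fin n)))
    (hΛ0 : Λ 0 = X₀)
    (hΛ : ∀ i : ℕ, 1 ≤ i → i ≤ N →
      Λ i = (fun x => φ (ti i) (ti (i - 1)) x) '' Λ (i - 1)
        + (fun u => (∫ s in ti (i - 1)..ti i, (φ (ti i) s).comp (B s)) u) '' U) :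
    ∀ i : ℕ, i ≤ N → Λ i ⊆ reachSet tl φ B X₀ U (ti i) := by
  have htrans : IsTransitionOn A φ (Icc tl tu) := hφ
  have hφc := htrans.continuousOn_right hφsg hA hle
  have hB : IntegrableOn B (Icc tl tu) := hBp.integrable hp.le
  have hti_mem (i : ℕ) (hi : i ≤ N) : ti i ∈ Icc tl tu := hti i ▸ grid_mem_Icc hle hi
  intro i
  induction i with
  | zero =>
    intro _
    rw [hΛ0, hti 0, Nat.cast_zero, zero_mul, zero_div, add_zero]
    exact subset_reachSet_self (htrans.apply_self (left_mem_Icc.2 hle)) hUne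
  | succ i ih =>
    intro hi
    rw [hΛ (i + 1) (Nat.le_add_left 1 i) hi, Nat.add_sub_cancel]
    rintro _ ⟨_, ⟨y, hy, rfl⟩, _, ⟨u₀, hu₀, rfl⟩, rfl⟩
    have hti_le : ti i ≤ ti (i + 1) := by
      simpa only [hti] using grid_monotone hle N (Nat.le_succ i)
    exact transition_add_mem_reachSet hφsg hφc hB hUcp.isBounded (hti_mem i (by omega))
      (hti_mem (i + 1) hi) hti_le (ih (by omega) hy) hu₀

/-- The iterates `Λ₀ᴺ = X₀`,
`Λᵢᴺ = φ(tᵢ,tᵢ₋₁)Λᵢ₋₁ᴺ + (∫_{tᵢ₋₁}^{tᵢ} φ(tᵢ,s)B(s) ds)·U` (uniform grid `tᵢ`) satisfy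
`Λᵢᴺ ⊆ R(tᵢ)` for all `i ∈ {0,…,N}`. -/
theorem iterates_subset_reachable {n m : ℕ} (tl tu : ℝ) (hle : tl ≤ tu)
    (A : ℝ → EuclideanSpace ℝ (Fin n) →L[ℝ] EuclideanSpace ℝ (Fin n))
    (hA : IntegrableOn A (Set.Icc tl tu))
    (B : ℝ → EuclideanSpace ℝ (Fin m) →L[ℝ] EuclideanSpace ℝ (Fin n))
    (hBmeas : AEStronglyMeasurable B (volume.restrict (Set.Icc tl tu)))
    (p : ℝ≥0∞) (hp : 1 < p)
    (hBp : MemLp B p (volume.restrict (Set.Icc tl tu)))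
    (X₀ : Set (EuclideanSpace ℝ (Fin n))) (U : Set (EuclideanSpace ℝ (Fin m)))
    (hX₀ne : X₀.Nonempty) (hX₀cp : IsCompact X₀) (hX₀cv : Convex ℝ X₀)
    (hUne : U.Nonempty) (hUcp : IsCompact U) (hUcv : Convex ℝ U)
    (φ : ℝ → ℝ → EuclideanSpace ℝ (Fin n) →L[ℝ] EuclideanSpace ℝ (Fin n))
    (hφid : ∀ s : ℝ, φ s s = ContinuousLinearMap.id ℝ (EuclideanSpace ℝ (Fin n)))
    (hφsg : ∀ t z s : ℝ, (φ t z).comp (φ z s) = φ t s)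
    (hφ : ∀ s ∈ Set.Icc tl tu, ∀ t ∈ Set.Icc tl tu,
      φ t s = ContinuousLinearMap.id ℝ (EuclideanSpace ℝ (Fin n))
        + ∫ z in s..t, (A z).comp (φ z s))
    (N : ℕ) (hN : 0 < N)
    (ti : ℕ → ℝ) (hti : ∀ i : ℕ, ti i = tl + i * (tu - tl) / N)
    (Λ : ℕ → Set (EuclideanSpace ℝ (Fin n)))
    (hΛ0 : Λ 0 = X₀)
    (hΛ : ∀ i : ℕ, 1 ≤ i → i ≤ N →
      Λ i = (fun x => φ (ti i) (ti (i - 1)) x) '' Λ (i - 1)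
        + (fun u => (∫ s in ti (i - 1)..ti i, (φ (ti i) s).comp (B s)) u) '' U) :
    ∀ i : ℕ, i ≤ N → Λ i ⊆ reachSet tl φ B X₀ U (ti i) :=
  iterates_subset_reachable_general tl tu hle A hA B p hp hBp X₀ U hUne hUcp φ hφsg hφ N ti hti Λ
    hΛ0 hΛ
end

section
/- With the iterates Λᵢᴺ as defined (constant-input piecewise reachable sets over a uniform partition of [t̲,t̄] into N subintervals), the Hausdorff distance d_H(Λᵢᴺ, R(tᵢ)) converges to 0 as N → ∞, uniformly in i ∈ {0,…,N}. -/
open MeasureTheory intervalIntegral Pointwise ENNReal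

/-!
Write `G s = φ tl s ∘ B s`. By the semigroup law both sets are images under `φ tᵢ tl` of
`X₀ + S`: for the reachable set `S` is the Aumann integral `∫_{tl}^{tᵢ} G(s) U ds`, for the
iterates it is the sum `∑_{j<i} (∫_{t_j}^{t_{j+1}} G) U`. The sum lies inside the integral
(piecewise constant inputs). Conversely, replace an input `u` on each subinterval by its mean,
which lies in `U` by convexity; since `u - ū_j` has mean zero, the error on that subinterval is
`∫ (G s - H t_j)(u s - ū_j) ds` for any `H`, and taking `H` continuous and `L¹`-close to `G`
makes the total error at most `2R (‖G - H‖₁ + (tu - tl) ω_H(mesh))`.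

This needs `G ∈ L¹`, i.e. that `s ↦ φ tl s` is bounded and measurable. The integral equation
for `φ` does not presuppose that its integrand is integrable (a non-integrable integral is `0`),
so even continuity of `t ↦ φ t c` takes an argument: on a subinterval where `∫ ‖A‖ ≤ 1/2` it
follows from a supremum argument, finitely many such subintervals cover `[tl, tu]`, and
`φ tl s = (φ s tl)⁻¹`.
-/

open Set Filter Topology

noncomputable def uniformGrid (a b : ℝ) (N i : ℕ) : ℝ := a + i * (b - a) / N

section UniformGrid

variable {a b : ℝ} {N : ℕ}

@[simp]
theorem uniformGrid_zero : uniformGrid a b N 0 = a := by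
  simp [uniformGrid]

theorem uniformGrid_self (hN : N ≠ 0) : uniformGrid a b N N = b := by
  simp [uniformGrid, hN]

theorem uniformGrid_succ_sub (i : ℕ) :
    uniformGrid a b N (i + 1) - uniformGrid a b N i = (b - a) / N := by
  simp only [uniformGrid]; push_cast; ring

theorem monotone_uniformGrid (hab : a ≤ b) : Monotone (uniformGrid a b N) :=
  monotone_nat_of_le_succ fun i => sub_nonneg.1 <| by
    rw [uniformGrid_succ_sub]; exact div_nonneg (sub_nonneg.2 hab) N.cast_nonneg

theorem uniformGrid_mem_Icc (hab : a ≤ b) {i : ℕ} (hi : i ≤ N) :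
    uniformGrid a b N i ∈ Icc a b := by
  refine ⟨by simpa using monotone_uniformGrid (N := N) hab (Nat.zero_le i), ?_⟩
  rcases eq_or_ne N 0 with rfl | hN
  · simp [Nat.le_zero.1 hi, hab]
  · simpa [uniformGrid_self hN] using monotone_uniformGrid (N := N) hab hi

theorem natCeil_div_eq_of_mem_Ioc_uniformGrid {s : ℝ} {j : ℕ}
    (hs : s ∈ Ioc (uniformGrid a b N j) (uniformGrid a b N (j + 1))) :
    ⌈(s - a) / ((b - a) / N)⌉₊ = j + 1 := by
  set h := (b - a) / N
  have hgrid : ∀ k : ℕ, uniformGrid a b N k = a + k * h := fun k => by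
    simp only [uniformGrid, h]; ring
  rw [hgrid, hgrid] at hs
  push_cast at hs
  have hh : 0 < h := by linarith [hs.1, hs.2]
  rw [Nat.ceil_eq_iff (n := j + 1) (by omega), Nat.add_sub_cancel, lt_div_iff₀ hh,
    div_le_iff₀ hh]
  push_cast
  constructor <;> linarith [hs.1, hs.2]

theorem eventually_forall_intervalIntegral_uniformGrid_le {f : ℝ → ℝ} (hab : a ≤ b)
    (hf : IntegrableOn f (Icc a b)) {η : ℝ} (hη : 0 < η) :
    ∀ᶠ N in atTop, ∀ j < N, ∫ z in uniformGrid a b N j..uniformGrid a b N (j + 1), f z ≤ η := by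
  rw [← uIcc_of_le hab] at hf
  obtain ⟨δ, hδ, hF⟩ := Metric.uniformContinuousOn_iff.1
    (isCompact_uIcc.uniformContinuousOn_of_continuous (continuousOn_primitive_interval hf)) η hη
  filter_upwards [(tendsto_const_div_atTop_nhds_zero_nat (b - a)).eventually (gt_mem_nhds hδ)]
    with N hN j hj
  have hc : ∀ k ≤ N, uniformGrid a b N k ∈ uIcc a b := fun k hk => by
    rw [uIcc_of_le hab]; exact uniformGrid_mem_Icc hab hk
  have hdist : dist (uniformGrid a b N (j + 1)) (uniformGrid a b N j) < δ := by
    rwa [Real.dist_eq, uniformGrid_succ_sub,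
      abs_of_nonneg (div_nonneg (sub_nonneg.2 hab) N.cast_nonneg)]
  rw [← integral_interval_sub_left
    (hf.mono_set (uIcc_subset_uIcc_left (hc _ hj))).intervalIntegrable
    (hf.mono_set (uIcc_subset_uIcc_left (hc j hj.le))).intervalIntegrable]
  exact (le_abs_self _).trans (Real.dist_eq _ _ ▸ hF _ (hc _ hj) _ (hc j hj.le) hdist).le

end UniformGrid

section Transition

variable {E : Type*} [NormedAddCommGroup E] [NormedSpace ℝ E] {A g : ℝ → E →L[ℝ] E} {c d : ℝ}

theorem continuousOn_of_eq_id_add_integral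
    (hf : IntegrableOn (fun z => (A z).comp (g z)) (Icc c d))
    (heq : ∀ t ∈ Icc c d, g t = ContinuousLinearMap.id ℝ E + ∫ z in c..t, (A z).comp (g z)) :
    ContinuousOn g (Icc c d) := by
  rcases le_or_gt c d with hcd | hdc
  · rw [← uIcc_of_le hcd] at hf ⊢
    refine ((continuousOn_const (c := ContinuousLinearMap.id ℝ E)).add
      (continuousOn_primitive_interval hf)).congr fun t ht => ?_
    exact heq t (by rwa [← uIcc_of_le hcd])
  · rw [Icc_eq_empty_of_lt hdc]
    exact continuousOn_empty g

theorem norm_le_two_of_eq_id_add_integral (hcd : c ≤ d) (hA : IntegrableOn A (Icc c d))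
    (hmass : ∫ z in c..d, ‖A z‖ ≤ 1 / 2)
    (heq : ∀ t ∈ Icc c d, g t = ContinuousLinearMap.id ℝ E + ∫ z in c..t, (A z).comp (g z))
    {t : ℝ} (ht : t ∈ Icc c d) (hf : IntegrableOn (fun z => (A z).comp (g z)) (Icc c t)) :
    ∀ τ ∈ Icc c t, ‖g τ‖ ≤ 2 := by
  have heq' : ∀ τ ∈ Icc c t,
      g τ = ContinuousLinearMap.id ℝ E + ∫ z in c..τ, (A z).comp (g z) := fun τ hτ =>
    heq τ ⟨hτ.1, hτ.2.trans ht.2⟩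
  obtain ⟨τ, hτ, hmax⟩ := isCompact_Icc.exists_isMaxOn (nonempty_Icc.2 ht.1)
    (continuousOn_of_eq_id_add_integral hf heq').norm
  have hA' : IntervalIntegrable (fun z => ‖A z‖) volume c d :=
    (intervalIntegrable_iff_integrableOn_Icc_of_le hcd).2 hA.norm
  have hM : ‖g τ‖ ≤ 1 + 1 / 2 * ‖g τ‖ :=
    calc ‖g τ‖ ≤ ‖ContinuousLinearMap.id ℝ E‖ + ‖∫ z in c..τ, (A z).comp (g z)‖ := by
          rw [heq' τ hτ]; exact norm_add_le _ _
      _ ≤ 1 + ∫ z in c..τ, ‖A z‖ * ‖g τ‖ := by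
          gcongr
          · exact ContinuousLinearMap.norm_id_le
          refine norm_integral_le_of_norm_le hτ.1 (Eventually.of_forall fun z hz => ?_)
            ((hA'.mono_set (uIcc_subset_uIcc_left
              (mem_uIcc_of_le hτ.1 (hτ.2.trans ht.2)))).mul_const _)
          exact (ContinuousLinearMap.opNorm_comp_le _ _).trans
            (by gcongr; exact hmax ⟨hz.1.le, hz.2.trans hτ.2⟩)
      _ ≤ 1 + 1 / 2 * ‖g τ‖ := by
          rw [intervalIntegral.integral_mul_const]
          gcongr
          exact (integral_mono_interval le_rfl hτ.1 (hτ.2.trans ht.2)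
            (Eventually.of_forall fun z => norm_nonneg _) hA').trans hmass
  exact fun τ' hτ' => (hmax hτ').trans (by linarith)

theorem integrableOn_comp_of_eq_id_add_integral (hcd : c ≤ d) (hA : IntegrableOn A (Icc c d))
    (hmass : ∫ z in c..d, ‖A z‖ ≤ 1 / 2)
    (heq : ∀ t ∈ Icc c d, g t = ContinuousLinearMap.id ℝ E + ∫ z in c..t, (A z).comp (g z)) :
    IntegrableOn (fun z => (A z).comp (g z)) (Icc c d) := by
  set f := fun z => (A z).comp (g z)
  set S := {t ∈ Icc c d | IntegrableOn f (Icc c t)}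
  have hS_cont : ∀ t ∈ S, ContinuousOn g (Icc c t) := fun t ht =>
    continuousOn_of_eq_id_add_integral ht.2 fun τ hτ => heq τ ⟨hτ.1, hτ.2.trans ht.1.2⟩
  have hS_bound : ∀ t ∈ S, ∀ τ ∈ Icc c t, ‖g τ‖ ≤ 2 := fun t ht =>
    norm_le_two_of_eq_id_add_integral hcd hA hmass heq ht.1 ht.2
  have hcS : c ∈ S := ⟨left_mem_Icc.2 hcd, by
    rw [Icc_self]; exact integrableOn_singleton (f := f) (hx := measure_singleton_lt_top)⟩
  have hS_bdd : BddAbove S := ⟨d, fun t ht => ht.1.2⟩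
  set e := sSup S
  have hce : c ≤ e := le_csSup hS_bdd hcS
  have hed : e ≤ d := csSup_le ⟨c, hcS⟩ fun t ht => ht.1.2
  -- below the supremum, `g` is continuous and bounded by `2`, which makes `f` integrable up to `e`
  have hlt_sup : ∀ z ∈ Ico c e, ∃ t ∈ S, z < t := fun z hz =>
    exists_lt_of_lt_csSup ⟨c, hcS⟩ hz.2
  have hg_cont : ContinuousOn g (Ico c e) := fun z hz => by
    obtain ⟨t, ht, hzt⟩ := hlt_sup z hz
    refine (hS_cont t ht z ⟨hz.1, hzt.le⟩).mono_of_mem_nhdsWithin ?_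
    exact mem_nhdsWithin.2 ⟨Iio t, isOpen_Iio, hzt, fun w hw => ⟨hw.2.1, hw.1.le⟩⟩
  have hg_bound : ∀ z ∈ Ico c e, ‖g z‖ ≤ 2 := fun z hz => by
    obtain ⟨t, ht, hzt⟩ := hlt_sup z hz
    exact hS_bound t ht z ⟨hz.1, hzt.le⟩
  have heS : IntegrableOn f (Icc c e) := by
    rw [integrableOn_Icc_iff_integrableOn_Ico (f := f)]
    exact (ContinuousLinearMap.compL ℝ E E E).integrable_of_bilin_of_bdd_right 2
      (hA.mono_set (Ico_subset_Icc_self.trans (Icc_subset_Icc_right hed)))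
      (hg_cont.aestronglyMeasurable measurableSet_Ico)
      ((ae_restrict_iff' measurableSet_Ico).2 (Eventually.of_forall hg_bound))
  -- above the supremum, the integral equation has a junk integral, so `g = id` and `f = A`
  have hf_above : EqOn f A (Ioc e d) := fun z hz => by
    have hzS : z ∉ S := fun hzS => (le_csSup hS_bdd hzS).not_gt hz.1
    have hfz : ¬IntervalIntegrable f volume c z := fun h => hzS
      ⟨⟨hce.trans hz.1.le, hz.2⟩, (integrableOn_Icc_iff_integrableOn_Ioc (f := f)).2
        ((intervalIntegrable_iff_integrableOn_Ioc_of_le (hce.trans hz.1.le)).1 h)⟩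
    simp only [f, heq z ⟨hce.trans hz.1.le, hz.2⟩, integral_undef hfz, add_zero]
    rfl
  rw [← Icc_union_Ioc_eq_Icc hce hed]
  exact heS.union ((hA.mono_set (Ioc_subset_Icc_self.trans (Icc_subset_Icc_left hce))).congr_fun
    hf_above.symm measurableSet_Ioc)

variable {φ : ℝ → ℝ → E →L[ℝ] E} {a b : ℝ}

theorem continuousOn_transition_left (hab : a ≤ b) (hA : IntegrableOn A (Icc a b))
    (hφsg : ∀ t z s, (φ t z).comp (φ z s) = φ t s)
    (hφ : ∀ s ∈ Icc a b, ∀ t ∈ Icc a b,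
      φ t s = ContinuousLinearMap.id ℝ E + ∫ z in s..t, (A z).comp (φ z s)) :
    ContinuousOn (fun t => φ t a) (Icc a b) := by
  obtain ⟨K, hmass, hK0⟩ := ((eventually_forall_intervalIntegral_uniformGrid_le hab hA.norm
    one_half_pos).and (eventually_ne_atTop 0)).exists
  set c := uniformGrid a b K
  have hpiece : ∀ j < K, ContinuousOn (fun t => φ t (c j)) (Icc (c j) (c (j + 1))) := by
    intro j hj
    have hle : c j ≤ c (j + 1) := monotone_uniformGrid hab j.le_succ
    have hsub : Icc (c j) (c (j + 1)) ⊆ Icc a b :=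
      Icc_subset_Icc (uniformGrid_mem_Icc hab hj.le).1 (uniformGrid_mem_Icc hab hj).2
    have heq := fun t ht => hφ (c j) (hsub (left_mem_Icc.2 hle)) t (hsub ht)
    exact continuousOn_of_eq_id_add_integral
      (integrableOn_comp_of_eq_id_add_integral hle (hA.mono_set hsub) (hmass j hj) heq) heq
  have hinit : ∀ j ≤ K, ContinuousOn (fun t => φ t a) (Icc a (c j)) := by
    intro j
    induction j with
    | zero => intro _; simp [c]
    | succ j ih =>
      intro hj
      rw [← Icc_union_Icc_eq_Icc (uniformGrid_mem_Icc hab (by omega)).1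
        (monotone_uniformGrid hab j.le_succ)]
      refine (ih (by omega)).union_of_isClosed ?_ isClosed_Icc isClosed_Icc
      exact ((hpiece j (by omega)).clm_comp continuousOn_const).congr
        fun t _ => (hφsg t (c j) a).symm
  simpa [c, uniformGrid_self hK0] using hinit K le_rfl

theorem continuousOn_transition_right [CompleteSpace E] (hab : a ≤ b)
    (hA : IntegrableOn A (Icc a b)) (hφid : ∀ s, φ s s = ContinuousLinearMap.id ℝ E)
    (hφsg : ∀ t z s, (φ t z).comp (φ z s) = φ t s)
    (hφ : ∀ s ∈ Icc a b, ∀ t ∈ Icc a b,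
      φ t s = ContinuousLinearMap.id ℝ E + ∫ z in s..t, (A z).comp (φ z s)) :
    ContinuousOn (fun s => φ a s) (Icc a b) := by
  let unit (s : ℝ) : (E →L[ℝ] E)ˣ :=
    ⟨φ s a, φ a s, by rw [ContinuousLinearMap.mul_def, hφsg, hφid, ContinuousLinearMap.one_def],
      by rw [ContinuousLinearMap.mul_def, hφsg, hφid, ContinuousLinearMap.one_def]⟩
  have hinv : ∀ s, Ring.inverse (φ s a) = φ a s := fun s => Ring.inverse_unit (unit s)
  intro s hs
  have hcont : ContinuousAt Ring.inverse (φ s a) := NormedRing.inverse_continuousAt (unit s)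
  simpa only [Function.comp_def, hinv] using
    hcont.comp_continuousWithinAt (f := fun t => φ t a)
      (continuousOn_transition_left hab hA hφsg hφ s hs)

end Transition

section Integrability

variable {E F : Type*} [NormedAddCommGroup E] [NormedSpace ℝ E]
  [NormedAddCommGroup F] [NormedSpace ℝ F]

theorem MeasureTheory.Integrable.clm_apply_of_norm_le {α : Type*} [MeasurableSpace α]
    {μ : Measure α} {Φ : α → E →L[ℝ] F} {v : α → E} {C : ℝ} (hΦ : Integrable Φ μ)
    (hv : AEStronglyMeasurable v μ) (hvC : ∀ x, ‖v x‖ ≤ C) :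
    Integrable (fun x => Φ x (v x)) μ :=
  (ContinuousLinearMap.apply ℝ F).integrable_of_bilin_of_bdd_left C hv
    (Eventually.of_forall hvC) hΦ

theorem IntervalIntegrable.clm_apply_of_norm_le {Φ : ℝ → E →L[ℝ] F} {v : ℝ → E} {α β C : ℝ}
    (hΦ : IntervalIntegrable Φ volume α β) (hv : IntervalIntegrable v volume α β)
    (hvC : ∀ x, ‖v x‖ ≤ C) : IntervalIntegrable (fun x => Φ x (v x)) volume α β :=
  intervalIntegrable_iff.2 <| Integrable.clm_apply_of_norm_le (intervalIntegrable_iff.1 hΦ)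
    (intervalIntegrable_iff.1 hv).aestronglyMeasurable hvC

theorem MeasureTheory.IntegrableOn.continuousOn_clm_comp {G : Type*} [NormedAddCommGroup G]
    [NormedSpace ℝ G] {Φ : ℝ → F →L[ℝ] G} {B : ℝ → E →L[ℝ] F} {a b : ℝ}
    (hB : IntegrableOn B (Icc a b)) (hΦ : ContinuousOn Φ (Icc a b)) :
    IntegrableOn (fun s => (Φ s).comp (B s)) (Icc a b) := by
  obtain ⟨C, hC⟩ := isCompact_Icc.exists_bound_of_continuousOn hΦ
  exact (ContinuousLinearMap.compL ℝ E F G).integrable_of_bilin_of_bdd_left C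
    (hΦ.aestronglyMeasurable measurableSet_Icc)
    ((ae_restrict_iff' measurableSet_Icc).2 (Eventually.of_forall hC)) hB

end Integrability

section Approximation

variable {E F : Type*} [NormedAddCommGroup E] [NormedSpace ℝ E] [CompleteSpace E]
  [NormedAddCommGroup F] [NormedSpace ℝ F] [CompleteSpace F]

theorem norm_integral_apply_sub_apply_le {G H : ℝ → E →L[ℝ] F} {u : ℝ → E} {w : E}
    {α β C ε : ℝ} (hαβ : α ≤ β) (hG : IntervalIntegrable G volume α β)
    (hu : IntervalIntegrable u volume α β) (huC : ∀ s, ‖u s - w‖ ≤ C)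
    (hw : ∫ s in α..β, u s = (β - α) • w) (hH : ∀ s ∈ Ioc α β, ‖H s - H α‖ ≤ ε)
    (hGH : IntervalIntegrable (fun s => ‖G s - H s‖) volume α β) :
    ‖(∫ s in α..β, G s (u s)) - (∫ s in α..β, G s) w‖ ≤
      C * ∫ s in α..β, (‖G s - H s‖ + ε) := by
  set v := fun s => u s - w
  have hv : IntervalIntegrable v volume α β := hu.sub intervalIntegrable_const
  have hv_zero : ∫ s in α..β, v s = 0 := by
    rw [intervalIntegral.integral_sub hu intervalIntegrable_const,
      intervalIntegral.integral_const, hw, sub_self]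
  have hD : (∫ s in α..β, G s (u s)) - (∫ s in α..β, G s) w =
      ∫ s in α..β, (G s - H α) (v s) := by
    have hGv := hG.clm_apply_of_norm_le hv huC
    have hHv := (intervalIntegrable_const (c := H α)).clm_apply_of_norm_le hv huC
    have hGu := hG.clm_apply_of_norm_le hu fun s =>
      (norm_le_norm_sub_add (u s) w).trans (add_le_add_left (huC s) ‖w‖)
    calc (∫ s in α..β, G s (u s)) - (∫ s in α..β, G s) w
        = ∫ s in α..β, G s (v s) := by
          rw [ContinuousLinearMap.intervalIntegral_apply hG, ← intervalIntegral.integral_sub hGu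
            (hG.clm_apply_of_norm_le intervalIntegrable_const fun _ => le_rfl)]
          simp only [v, map_sub]
      _ = (∫ s in α..β, G s (v s)) - H α (∫ s in α..β, v s) := by
          rw [hv_zero, map_zero, sub_zero]
      _ = ∫ s in α..β, (G s - H α) (v s) := by
          rw [← (H α).intervalIntegral_comp_comm hv, ← intervalIntegral.integral_sub hGv hHv]
          rfl
  rw [hD, ← intervalIntegral.integral_const_mul]
  refine norm_integral_le_of_norm_le hαβ (Eventually.of_forall fun s hs => ?_)
    ((hGH.add intervalIntegrable_const).const_mul C)
  calc ‖(G s - H α) (v s)‖ ≤ ‖G s - H α‖ * ‖v s‖ := (G s - H α).le_opNorm _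
    _ ≤ (‖G s - H s‖ + ε) * C :=
        mul_le_mul ((norm_sub_le_norm_sub_add_norm_sub _ _ _).trans (add_le_add le_rfl (hH s hs)))
          (huC s) (norm_nonneg _) (add_nonneg (norm_nonneg _) ((norm_nonneg _).trans (hH s hs)))
    _ = C * (‖G s - H s‖ + ε) := mul_comm _ _

theorem norm_integral_apply_sub_sum_le {G H : ℝ → E →L[ℝ] F} {a b C ε : ℝ} {N i : ℕ}
    (hab : a ≤ b) (hi : i ≤ N) (hG : IntegrableOn G (Icc a b)) (hH : Continuous H)
    (hε : 0 ≤ ε) (hHε : ∀ j < i, ∀ s ∈ Ioc (uniformGrid a b N j) (uniformGrid a b N (j + 1)),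
      ‖H s - H (uniformGrid a b N j)‖ ≤ ε)
    {u : ℝ → E} (hu : IntegrableOn u (Icc a b)) (huC : ∀ s, ‖u s‖ ≤ C)
    {w : ℕ → E} (hwC : ∀ j, ‖w j‖ ≤ C)
    (hw : ∀ j < i, ∫ s in uniformGrid a b N j..uniformGrid a b N (j + 1), u s =
      (uniformGrid a b N (j + 1) - uniformGrid a b N j) • w j) :
    ‖(∫ s in a..uniformGrid a b N i, G s (u s)) - ∑ j ∈ Finset.range i,
        (∫ s in uniformGrid a b N j..uniformGrid a b N (j + 1), G s) (w j)‖ ≤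
      2 * C * ((∫ s in Icc a b, ‖G s - H s‖) + ε * (b - a)) := by
  set t := uniformGrid a b N
  have hC : 0 ≤ C := (norm_nonneg _).trans (huC a)
  have ht0 : t 0 = a := uniformGrid_zero
  have hsub : ∀ j < N, uIcc (t j) (t (j + 1)) ⊆ Icc a b := fun j hj =>
    uIcc_subset_Icc (uniformGrid_mem_Icc hab hj.le) (uniformGrid_mem_Icc hab hj)
  have hGu : IntegrableOn (fun s => G s (u s)) (Icc a b) :=
    hG.clm_apply_of_norm_le hu.aestronglyMeasurable huC
  have hGH : IntegrableOn (fun s => ‖G s - H s‖) (Icc a b) := (hG.sub hH.integrableOn_Icc).norm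
  have hGHε : IntegrableOn (fun s => ‖G s - H s‖ + ε) (Icc a b) :=
    hGH.add (integrableOn_const measure_Icc_lt_top.ne)
  calc ‖(∫ s in a..t i, G s (u s)) - ∑ j ∈ Finset.range i, (∫ s in t j..t (j + 1), G s) (w j)‖
      = ‖∑ j ∈ Finset.range i,
          ((∫ s in t j..t (j + 1), G s (u s)) - (∫ s in t j..t (j + 1), G s) (w j))‖ := by
        rw [Finset.sum_sub_distrib, sum_integral_adjacent_intervals
          fun j hj => (hGu.mono_set (hsub j (by omega))).intervalIntegrable, ht0]
    _ ≤ ∑ j ∈ Finset.range i, 2 * C * ∫ s in t j..t (j + 1), (‖G s - H s‖ + ε) := by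
        refine norm_sum_le_of_le _ fun j hj => ?_
        have hj := Finset.mem_range.1 hj
        have hj' := hsub j (by omega)
        exact norm_integral_apply_sub_apply_le (monotone_uniformGrid hab j.le_succ)
          (hG.mono_set hj').intervalIntegrable (hu.mono_set hj').intervalIntegrable
          (fun s => (norm_sub_le _ _).trans (by linarith [huC s, hwC j])) (hw j hj)
          (hHε j hj) (hGH.mono_set hj').intervalIntegrable
    _ = 2 * C * ∫ s in a..t i, (‖G s - H s‖ + ε) := by
        rw [← Finset.mul_sum, sum_integral_adjacent_intervals
          fun j hj => (hGHε.mono_set (hsub j (by omega))).intervalIntegrable, ht0]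
    _ ≤ 2 * C * ∫ s in a..b, (‖G s - H s‖ + ε) := by
        gcongr
        exact integral_mono_interval le_rfl (uniformGrid_mem_Icc hab hi).1
          (uniformGrid_mem_Icc hab hi).2 (Eventually.of_forall fun s => by positivity)
          (hGHε.mono_set (uIcc_of_le hab).subset).intervalIntegrable
    _ = 2 * C * ((∫ s in Icc a b, ‖G s - H s‖) + ε * (b - a)) := by
        rw [intervalIntegral.integral_add
          (hGH.mono_set (uIcc_of_le hab).subset).intervalIntegrable intervalIntegrable_const,
          intervalIntegral.integral_const, integral_of_le hab, ← integral_Icc_eq_integral_Ioc,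
          smul_eq_mul, mul_comm ε]

theorem eventually_norm_integral_apply_sub_sum_le {G : ℝ → E →L[ℝ] F} {a b : ℝ} (hab : a ≤ b)
    (hG : IntegrableOn G (Icc a b)) (C : ℝ) {η : ℝ} (hη : 0 < η) :
    ∀ᶠ N in atTop, ∀ i ≤ N, ∀ u : ℝ → E, IntegrableOn u (Icc a b) → (∀ s, ‖u s‖ ≤ C) →
      ∀ w : ℕ → E, (∀ j, ‖w j‖ ≤ C) →
      (∀ j < i, ∫ s in uniformGrid a b N j..uniformGrid a b N (j + 1), u s =
        (uniformGrid a b N (j + 1) - uniformGrid a b N j) • w j) →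
      ‖(∫ s in a..uniformGrid a b N i, G s (u s)) - ∑ j ∈ Finset.range i,
        (∫ s in uniformGrid a b N j..uniformGrid a b N (j + 1), G s) (w j)‖ ≤ C * η := by
  obtain ⟨H, hH_supp, hGH, hH, -⟩ :=
    Integrable.exists_hasCompactSupport_integral_sub_le hG (div_pos hη four_pos)
  set ε := η / (4 * (b - a + 1))
  have hε : 0 < ε := by positivity
  have hεη : ε * (b - a) ≤ η / 4 := by
    calc ε * (b - a) ≤ ε * (b - a + 1) := by gcongr; linarith
      _ = η / 4 := by simp only [ε]; field_simp [show b - a + 1 ≠ 0 by linarith]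
  obtain ⟨δ, hδ, hHδ⟩ :=
    Metric.uniformContinuous_iff.1 (hH_supp.uniformContinuous_of_continuous hH) ε hε
  filter_upwards [(tendsto_const_div_atTop_nhds_zero_nat (b - a)).eventually (gt_mem_nhds hδ)]
    with N hN i hi u hu huC w hwC hw
  have hC : 0 ≤ C := (norm_nonneg _).trans (huC a)
  have hHε : ∀ j < i, ∀ s ∈ Ioc (uniformGrid a b N j) (uniformGrid a b N (j + 1)),
      ‖H s - H (uniformGrid a b N j)‖ ≤ ε := fun j _ s hs => by
    have hdist : dist s (uniformGrid a b N j) < δ := by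
      rw [Real.dist_eq, abs_of_nonneg (by linarith [hs.1])]
      linarith [hs.2, uniformGrid_succ_sub (a := a) (b := b) (N := N) j]
    exact (dist_eq_norm (H s) _ ▸ hHδ hdist).le
  calc _ ≤ 2 * C * ((∫ s in Icc a b, ‖G s - H s‖) + ε * (b - a)) :=
        norm_integral_apply_sub_sum_le hab hi hG hH hε.le hHε hu huC hwC hw
    _ ≤ 2 * C * (η / 4 + η / 4) := by gcongr
    _ = C * η := by ring

theorem Convex.exists_intervalIntegral_eq_smul_mem {U : Set E} (hUc : Convex ℝ U)
    (hUcl : IsClosed U) (hU : U.Nonempty) {u : ℝ → E} {α β : ℝ}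
    (hu : IntervalIntegrable u volume α β) (huU : ∀ s, u s ∈ U) :
    ∃ w ∈ U, ∫ s in α..β, u s = (β - α) • w := by
  rcases eq_or_ne α β with rfl | hαβ
  · exact ⟨hU.some, hU.some_mem, by simp⟩
  refine ⟨⨍ s in α..β, u s, hUc.set_average_mem hUcl ?_ ?_ (Eventually.of_forall huU)
    (intervalIntegrable_iff.1 hu), ?_⟩
  · simpa [Real.volume_uIoc, sub_eq_zero] using hαβ.symm
  · simp [Real.volume_uIoc]
  · rw [interval_average_eq, smul_smul, mul_inv_cancel₀ (sub_ne_zero.2 hαβ.symm), one_smul]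

end Approximation

theorem Set.mem_finsetSum_image_iff {ι α β : Type*} [AddCommMonoid β] {s : Finset ι}
    {f : ι → α → β} {U : Set α} (hU : U.Nonempty) {y : β} :
    y ∈ ∑ j ∈ s, f j '' U ↔ ∃ w : ι → α, (∀ j, w j ∈ U) ∧ ∑ j ∈ s, f j (w j) = y := by
  classical
  refine ⟨fun hy => ?_, fun ⟨w, hwU, hw⟩ =>
    hw ▸ finsetSum_mem_finsetSum _ _ _ fun j _ => mem_image_of_mem _ (hwU j)⟩
  obtain ⟨g, hg, rfl⟩ := (mem_finsetSum _ _ _).1 hy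
  have : ∀ j, ∃ x ∈ U, j ∈ s → f j x = g j := fun j =>
    if hj : j ∈ s then (hg hj).imp fun x hx => ⟨hx.1, fun _ => hx.2⟩
    else ⟨hU.some, hU.some_mem, fun h => absurd h hj⟩
  choose w hwU hw using this
  exact ⟨w, hwU, Finset.sum_congr rfl fun j hj => hw j hj⟩

section AumannIntegral

variable {E F : Type*} [NormedAddCommGroup E] [NormedSpace ℝ E]
  [NormedAddCommGroup F] [NormedSpace ℝ F] [MeasurableSpace E]

noncomputable def aumannIntegral (G : ℝ → E →L[ℝ] F) (U : Set E) (a t : ℝ) : Set F :=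
  {y | ∃ u : ℝ → E, Measurable u ∧ (∀ s, u s ∈ U) ∧ (∫ s in a..t, G s (u s)) = y}

theorem sum_image_subset_aumannIntegral {G : ℝ → E →L[ℝ] F} {U : Set E} {a b : ℝ} {N i : ℕ}
    (hab : a ≤ b) (hG : IntegrableOn G (Icc a b)) (hU : U.Nonempty) (hi : i ≤ N) :
    ∑ j ∈ Finset.range i, ⇑(∫ s in uniformGrid a b N j..uniformGrid a b N (j + 1), G s) '' U ⊆
      aumannIntegral G U a (uniformGrid a b N i) := by
  intro y hy
  obtain ⟨w, hwU, rfl⟩ := (mem_finsetSum_image_iff hU).1 hy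
  set t := uniformGrid a b N
  set u : ℝ → E := fun s => w (⌈(s - a) / ((b - a) / N)⌉₊ - 1)
  have hu : ∀ j, EqOn (fun s => G s (w j)) (fun s => G s (u s)) (uIoc (t j) (t (j + 1))) :=
    fun j s hs => by
      rw [uIoc_of_le (monotone_uniformGrid hab j.le_succ)] at hs
      simp only [u, natCeil_div_eq_of_mem_Ioc_uniformGrid hs, Nat.add_sub_cancel]
  have hG_piece : ∀ j < i, IntegrableOn G (uIcc (t j) (t (j + 1))) := fun j hj =>
    hG.mono_set (uIcc_subset_Icc (uniformGrid_mem_Icc hab (by omega))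
      (uniformGrid_mem_Icc hab (by omega)))
  have hGu : ∀ j < i, IntervalIntegrable (fun s => G s (u s)) volume (t j) (t (j + 1)) :=
    fun j hj => by
      have hGw : IntegrableOn (fun s => G s (w j)) (uIcc (t j) (t (j + 1))) :=
        Integrable.apply_continuousLinearMap (hG_piece j hj) (w j)
      exact hGw.intervalIntegrable.congr (hu j)
  refine ⟨u, (measurable_from_nat (f := fun k => w (k - 1))).comp
    (Nat.measurable_ceil.comp ((measurable_id.sub_const a).div_const _)), fun s => hwU _, ?_⟩
  calc ∫ s in a..t i, G s (u s)
      = ∑ j ∈ Finset.range i, ∫ s in t j..t (j + 1), G s (u s) := by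
        rw [sum_integral_adjacent_intervals hGu, show t 0 = a from uniformGrid_zero]
    _ = ∑ j ∈ Finset.range i, (∫ s in t j..t (j + 1), G s) (w j) := by
        refine Finset.sum_congr rfl fun j hj => ?_
        rw [ContinuousLinearMap.intervalIntegral_apply (φ := G)
          (hG_piece j (Finset.mem_range.1 hj)).intervalIntegrable]
        exact (integral_congr_ae (Eventually.of_forall fun s hs => hu j hs)).symm

theorem eventually_forall_mem_aumannIntegral_exists_near_sum [CompleteSpace E] [CompleteSpace F]
    [BorelSpace E] [SecondCountableTopology E] {G : ℝ → E →L[ℝ] F} {U : Set E} {a b C η : ℝ}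
    (hab : a ≤ b) (hG : IntegrableOn G (Icc a b)) (hUc : Convex ℝ U) (hUcl : IsClosed U)
    (hU : U.Nonempty) (hUC : ∀ x ∈ U, ‖x‖ ≤ C) (hη : 0 < η) :
    ∀ᶠ N in atTop, ∀ i ≤ N, ∀ y ∈ aumannIntegral G U a (uniformGrid a b N i),
      ∃ z ∈ ∑ j ∈ Finset.range i,
        ⇑(∫ s in uniformGrid a b N j..uniformGrid a b N (j + 1), G s) '' U, ‖y - z‖ ≤ C * η := by
  filter_upwards [eventually_norm_integral_apply_sub_sum_le hab hG C hη]
    with N hN i hi y ⟨u, hu, huU, hy⟩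
  have huC : ∀ s, ‖u s‖ ≤ C := fun s => hUC _ (huU s)
  have hu_int : ∀ S : Set ℝ, volume S ≠ ∞ → IntegrableOn u S := fun S hS =>
    Measure.integrableOn_of_bounded hS hu.aestronglyMeasurable (Eventually.of_forall huC)
  choose w hwU hw using fun j => hUc.exists_intervalIntegral_eq_smul_mem hUcl hU
    (hu_int _ isCompact_uIcc.measure_lt_top.ne).intervalIntegrable huU
    (α := uniformGrid a b N j) (β := uniformGrid a b N (j + 1))
  exact ⟨_, (mem_finsetSum_image_iff hU).2 ⟨w, hwU, rfl⟩, hy ▸ hN i hi u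
    (hu_int _ measure_Icc_lt_top.ne) huC w (fun j => hUC _ (hwU j)) fun j _ => hw j⟩

end AumannIntegral

theorem hausdorffDist_image_add_le {E F : Type*} [NormedAddCommGroup E] [NormedSpace ℝ E]
    [NormedAddCommGroup F] [NormedSpace ℝ F] (L : E →L[ℝ] F) {X S T : Set E} {r : ℝ}
    (hr : 0 ≤ r) (hST : S ⊆ T) (hTS : ∀ y ∈ T, ∃ x ∈ S, ‖y - x‖ ≤ r) :
    Metric.hausdorffDist (L '' (X + S)) (L '' (X + T)) ≤ ‖L‖ * r := by
  refine Metric.hausdorffDist_le_of_mem_dist (by positivity)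
    (fun p hp => ⟨p, image_mono (add_subset_add_left hST) hp, by rw [dist_self]; positivity⟩) ?_
  rintro _ ⟨_, ⟨x, hx, y, hy, rfl⟩, rfl⟩
  obtain ⟨y', hy', hyy'⟩ := hTS y hy
  refine ⟨L (x + y'), mem_image_of_mem _ (add_mem_add hx hy'), ?_⟩
  rw [dist_eq_norm, ← map_sub, add_sub_add_left_eq_sub]
  exact (L.le_opNorm _).trans (by gcongr)

theorem ContinuousLinearEquiv.intervalIntegral_comp_comm {E F : Type*} [NormedAddCommGroup E]
    [NormedSpace ℝ E] [NormedAddCommGroup F] [NormedSpace ℝ F] (L : E ≃L[ℝ] F) (f : ℝ → E)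
    (a b : ℝ) : ∫ x in a..b, L (f x) = L (∫ x in a..b, f x) := by
  simp_rw [intervalIntegral, L.integral_comp_comm, map_sub]

section VariationOfConstants

variable {E F : Type*} [NormedAddCommGroup E] [NormedSpace ℝ E]
  [NormedAddCommGroup F] [NormedSpace ℝ F] [CompleteSpace F]
  {φ : ℝ → ℝ → F →L[ℝ] F} {B : ℝ → E →L[ℝ] F}

theorem intervalIntegral_transition_comp (hφsg : ∀ t z s, (φ t z).comp (φ z s) = φ t s)
    {a α β : ℝ} (hG : IntervalIntegrable (fun s => (φ a s).comp (B s)) volume α β) (T : ℝ) :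
    ∫ s in α..β, (φ T s).comp (B s) = (φ T a).comp (∫ s in α..β, (φ a s).comp (B s)) := by
  have h : ∀ s, (φ T s).comp (B s) =
      ContinuousLinearMap.compL ℝ E F F (φ T a) ((φ a s).comp (B s)) := fun s => by
    rw [ContinuousLinearMap.compL_apply, ← ContinuousLinearMap.comp_assoc, hφsg]
  simp_rw [h]
  exact (ContinuousLinearMap.compL ℝ E F F (φ T a)).intervalIntegral_comp_comm hG

theorem iterates_eq_image_add_sum (hφid : ∀ s, φ s s = ContinuousLinearMap.id ℝ F)
    (hφsg : ∀ t z s, (φ t z).comp (φ z s) = φ t s) {X₀ : Set F} {U : Set E}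
    {Λ : ℕ → Set F} {t : ℕ → ℝ} {a : ℝ} {N : ℕ} (ht0 : t 0 = a)
    (hG : ∀ i < N, IntervalIntegrable (fun s => (φ a s).comp (B s)) volume (t i) (t (i + 1)))
    (hΛ0 : Λ 0 = X₀)
    (hΛ : ∀ i < N, Λ (i + 1) = (fun x => φ (t (i + 1)) (t i) x) '' Λ i
      + (fun u => (∫ s in t i..t (i + 1), (φ (t (i + 1)) s).comp (B s)) u) '' U) :
    ∀ i ≤ N, Λ i = φ (t i) a ''
      (X₀ + ∑ j ∈ Finset.range i, ⇑(∫ s in t j..t (j + 1), (φ a s).comp (B s)) '' U) := by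
  intro i
  induction i with
  | zero => intro _; simp [hΛ0, ht0, hφid]
  | succ i ih =>
    intro hi
    rw [hΛ i hi, ih (by omega), Finset.sum_range_succ, ← add_assoc,
      image_add (φ (t (i + 1)) a)]
    congr 1
    · rw [image_image]
      refine image_congr fun x _ => ?_
      rw [← ContinuousLinearMap.comp_apply, hφsg]
    · rw [image_image]
      refine image_congr fun u _ => ?_
      rw [intervalIntegral_transition_comp hφsg (hG i hi), ContinuousLinearMap.comp_apply]

end VariationOfConstants

theorem reachSet_eq_image_add_aumannIntegral {n m : ℕ} {tl t : ℝ}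
    {φ : ℝ → ℝ → EuclideanSpace ℝ (Fin n) →L[ℝ] EuclideanSpace ℝ (Fin n)}
    {B : ℝ → EuclideanSpace ℝ (Fin m) →L[ℝ] EuclideanSpace ℝ (Fin n)}
    {X₀ : Set (EuclideanSpace ℝ (Fin n))} {U : Set (EuclideanSpace ℝ (Fin m))}
    (hφid : ∀ s, φ s s = ContinuousLinearMap.id ℝ (EuclideanSpace ℝ (Fin n)))
    (hφsg : ∀ t z s, (φ t z).comp (φ z s) = φ t s) :
    reachSet tl φ B X₀ U t =
      φ t tl '' (X₀ + aumannIntegral (fun s => (φ tl s).comp (B s)) U tl t) := by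
  have hφ_apply : ∀ t z s x, φ t z (φ z s x) = φ t s x := fun t z s x => by
    rw [← ContinuousLinearMap.comp_apply, hφsg]
  let e := ContinuousLinearEquiv.equivOfInverse (φ t tl) (φ tl t)
    (fun x => by rw [hφ_apply, hφid]; rfl) (fun x => by rw [hφ_apply, hφid]; rfl)
  have hint : ∀ u : ℝ → EuclideanSpace ℝ (Fin m), ∫ s in tl..t, φ t s (B s (u s)) =
      φ t tl (∫ s in tl..t, (φ tl s).comp (B s) (u s)) := fun u =>
    (integral_congr fun s _ => (hφ_apply t tl s _).symm).trans
      (e.intervalIntegral_comp_comm _ _ _)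
  ext x
  constructor
  · rintro ⟨x₀, hx₀, u, hu, huU, rfl⟩
    exact ⟨_, ⟨x₀, hx₀, _, ⟨u, hu, huU, rfl⟩, rfl⟩, by rw [map_add, hint]⟩
  · rintro ⟨_, ⟨x₀, hx₀, _, ⟨u, hu, huU, rfl⟩, rfl⟩, rfl⟩
    exact ⟨x₀, hx₀, u, hu, huU, by rw [map_add, hint]⟩

theorem iterates_hausdorff_convergence_general {n m : ℕ} (tl tu : ℝ) (hle : tl ≤ tu)
    (A : ℝ → EuclideanSpace ℝ (Fin n) →L[ℝ] EuclideanSpace ℝ (Fin n))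
    (hA : IntegrableOn A (Set.Icc tl tu))
    (B : ℝ → EuclideanSpace ℝ (Fin m) →L[ℝ] EuclideanSpace ℝ (Fin n))
    (p : ℝ≥0∞) (hp : 1 < p)
    (hBp : MemLp B p (volume.restrict (Set.Icc tl tu)))
    (X₀ : Set (EuclideanSpace ℝ (Fin n))) (U : Set (EuclideanSpace ℝ (Fin m)))
    (hUne : U.Nonempty) (hUcp : IsCompact U) (hUcv : Convex ℝ U)
    (φ : ℝ → ℝ → EuclideanSpace ℝ (Fin n) →L[ℝ] EuclideanSpace ℝ (Fin n))
    (hφid : ∀ s : ℝ, φ s s = ContinuousLinearMap.id ℝ (EuclideanSpace ℝ (Fin n)))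
    (hφsg : ∀ t z s : ℝ, (φ t z).comp (φ z s) = φ t s)
    (hφ : ∀ s ∈ Set.Icc tl tu, ∀ t ∈ Set.Icc tl tu,
      φ t s = ContinuousLinearMap.id ℝ (EuclideanSpace ℝ (Fin n))
        + ∫ z in s..t, (A z).comp (φ z s))
    (ti : ℕ → ℕ → ℝ) (hti : ∀ N i : ℕ, ti N i = tl + i * (tu - tl) / N)
    (Λ : ℕ → ℕ → Set (EuclideanSpace ℝ (Fin n)))
    (hΛ0 : ∀ N : ℕ, 0 < N → Λ N 0 = X₀)
    (hΛ : ∀ N : ℕ, 0 < N → ∀ i : ℕ, 1 ≤ i → i ≤ N →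
      Λ N i = (fun x => φ (ti N i) (ti N (i - 1)) x) '' Λ N (i - 1)
        + (fun u => (∫ s in ti N (i - 1)..ti N i, (φ (ti N i) s).comp (B s)) u) '' U) :
    ∀ ε : ℝ, 0 < ε → ∃ N₀ : ℕ, ∀ N : ℕ, N₀ ≤ N → 0 < N → ∀ i : ℕ, i ≤ N →
      Metric.hausdorffDist (Λ N i) (reachSet tl φ B X₀ U (ti N i)) < ε := by
  intro ε hε
  obtain rfl : ti = uniformGrid tl tu := funext fun N => funext (hti N)
  obtain ⟨M, hM0, hM⟩ := (isCompact_Icc.image_of_continuousOn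
    (continuousOn_transition_left hle hA hφsg hφ)).isBounded.exists_pos_norm_le
  have hG : IntegrableOn (fun s => (φ tl s).comp (B s)) (Icc tl tu) :=
    IntegrableOn.continuousOn_clm_comp (hBp.integrable hp.le)
      (continuousOn_transition_right hle hA hφid hφsg hφ)
  obtain ⟨R, hR0, hR⟩ := hUcp.isBounded.exists_pos_norm_le
  obtain ⟨N₀, hN₀⟩ := eventually_atTop.1 <|
    eventually_forall_mem_aumannIntegral_exists_near_sum hle hG hUcv hUcp.isClosed hUne hR
      (η := ε / (2 * M * R)) (by positivity)
  refine ⟨N₀, fun N hN hN0 i hi => ?_⟩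
  rw [iterates_eq_image_add_sum hφid hφsg uniformGrid_zero
      (fun j hj => (hG.mono_set (uIcc_subset_Icc (uniformGrid_mem_Icc hle hj.le)
        (uniformGrid_mem_Icc hle hj))).intervalIntegrable) (hΛ0 N hN0)
      (fun j hj => by simpa only [Nat.add_sub_cancel] using hΛ N hN0 (j + 1) (by omega) hj) i hi,
    reachSet_eq_image_add_aumannIntegral hφid hφsg]
  calc _ ≤ ‖φ (uniformGrid tl tu N i) tl‖ * (R * (ε / (2 * M * R))) :=
        hausdorffDist_image_add_le _ (by positivity)
          (sum_image_subset_aumannIntegral hle hG hUne hi) (hN₀ N hN i hi)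
    _ ≤ M * (R * (ε / (2 * M * R))) := by
        gcongr
        exact hM _ (mem_image_of_mem _ (uniformGrid_mem_Icc hle hi))
    _ = ε / 2 := by field_simp
    _ < ε := half_lt_self hε

/-- The Hausdorff distance `d_H(Λᵢᴺ, R(tᵢ))` converges to `0` as `N → ∞`,
uniformly in `i ∈ {0,…,N}`. -/
theorem iterates_hausdorff_convergence {n m : ℕ} (tl tu : ℝ) (hle : tl ≤ tu)
    (A : ℝ → EuclideanSpace ℝ (Fin n) →L[ℝ] EuclideanSpace ℝ (Fin n))
    (hA : IntegrableOn A (Set.Icc tl tu))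
    (B : ℝ → EuclideanSpace ℝ (Fin m) →L[ℝ] EuclideanSpace ℝ (Fin n))
    (hBmeas : AEStronglyMeasurable B (volume.restrict (Set.Icc tl tu)))
    (p : ℝ≥0∞) (hp : 1 < p)
    (hBp : MemLp B p (volume.restrict (Set.Icc tl tu)))
    (X₀ : Set (EuclideanSpace ℝ (Fin n))) (U : Set (EuclideanSpace ℝ (Fin m)))
    (hX₀ne : X₀.Nonempty) (hX₀cp : IsCompact X₀) (hX₀cv : Convex ℝ X₀)
    (hUne : U.Nonempty) (hUcp : IsCompact U) (hUcv : Convex ℝ U)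
    (φ : ℝ → ℝ → EuclideanSpace ℝ (Fin n) →L[ℝ] EuclideanSpace ℝ (Fin n))
    (hφid : ∀ s : ℝ, φ s s = ContinuousLinearMap.id ℝ (EuclideanSpace ℝ (Fin n)))
    (hφsg : ∀ t z s : ℝ, (φ t z).comp (φ z s) = φ t s)
    (hφ : ∀ s ∈ Set.Icc tl tu, ∀ t ∈ Set.Icc tl tu,
      φ t s = ContinuousLinearMap.id ℝ (EuclideanSpace ℝ (Fin n))
        + ∫ z in s..t, (A z).comp (φ z s))
    (ti : ℕ → ℕ → ℝ) (hti : ∀ N i : ℕ, ti N i = tl + i * (tu - tl) / N)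
    (Λ : ℕ → ℕ → Set (EuclideanSpace ℝ (Fin n)))
    (hΛ0 : ∀ N : ℕ, 0 < N → Λ N 0 = X₀)
    (hΛ : ∀ N : ℕ, 0 < N → ∀ i : ℕ, 1 ≤ i → i ≤ N →
      Λ N i = (fun x => φ (ti N i) (ti N (i - 1)) x) '' Λ N (i - 1)
        + (fun u => (∫ s in ti N (i - 1)..ti N i, (φ (ti N i) s).comp (B s)) u) '' U) :
    ∀ ε : ℝ, 0 < ε → ∃ N₀ : ℕ, ∀ N : ℕ, N₀ ≤ N → 0 < N → ∀ i : ℕ, i ≤ N →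
      Metric.hausdorffDist (Λ N i) (reachSet tl φ B X₀ U (ti N i)) < ε :=
  iterates_hausdorff_convergence_general tl tu hle A hA B p hp hBp X₀ U hUne hUcp hUcv φ hφid hφsg
    hφ ti hti Λ hΛ0 hΛ
end

section
/- Let {Λᵢ}_{i=0}^{N} be nonempty compact subsets of ℝ^n with Λᵢ ⊆ R(tᵢ), where t₀ ≤ t₁ ≤ … ≤ t_N partition [t̲,t̄]. Then d_H(⋃_{i=0}^{N} Λᵢ, ⋃_{t∈[t̲,t̄]} R(t)) ≤ max_{i∈{0,…,N−1}} sup_{t∈[tᵢ,tᵢ₊₁]} d_H(R(t), Λᵢ), where R : [t̲,t̄] → compact subsets of ℝ^n is continuous in Hausdorff distance. -/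
/-!
Each `Λᵢ` lies in `R(tᵢ)`, so the union of the `Λᵢ` is contained in the union of the `R(t)` and
only the distance from points of the latter to the former has to be bounded. A point of `R(u)`
lies, for an index `i` with `u ∈ [tᵢ, tᵢ₊₁]`, within `d_H(R(u), Λᵢ)` of `Λᵢ`.
-/

open Bornology Metric Set

theorem exists_lt_mem_Icc_of_le_of_le {α : Type*} [LinearOrder α] {t : ℕ → α} {u : α} :
    ∀ {N : ℕ}, 0 < N → t 0 ≤ u → u ≤ t N → ∃ i < N, u ∈ Icc (t i) (t (i + 1))
  | 0, hN, _, _ => absurd hN (lt_irrefl 0)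
  | N + 1, _, h0, hN => by
    by_cases hNu : t N ≤ u
    · exact ⟨N, N.lt_succ_self, hNu, hN⟩
    · have hpos : 0 < N := Nat.pos_of_ne_zero fun hN0 => hNu (hN0 ▸ h0)
      obtain ⟨i, hi, hu⟩ := exists_lt_mem_Icc_of_le_of_le hpos h0 (not_le.1 hNu).le
      exact ⟨i, hi.trans N.lt_succ_self, hu⟩

section Hausdorff

variable {X : Type*} [PseudoMetricSpace X] {s t : Set X} {x : X} {C : ℝ}

theorem Metric.infDist_le_hausdorffDist_of_mem_of_isBounded (hx : x ∈ s) (ht : t.Nonempty)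
    (hs_bdd : IsBounded s) (ht_bdd : IsBounded t) : infDist x t ≤ hausdorffDist s t :=
  infDist_le_hausdorffDist_of_mem hx
    (hausdorffEDist_ne_top_of_nonempty_of_bounded ⟨x, hx⟩ ht hs_bdd ht_bdd)

theorem Metric.hausdorffDist_le_of_subset_of_infDist_le (hst : s ⊆ t) (hC : 0 ≤ C)
    (h : ∀ x ∈ t, infDist x s ≤ C) : hausdorffDist s t ≤ C :=
  hausdorffDist_le_of_infDist hC (fun _ hx => (infDist_zero_of_mem (hst hx)).trans_le hC) h

end Hausdorff

theorem hausdorff_dist_union_le_general {n : ℕ} (tl tu : ℝ)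
    (N : ℕ) (hN : 1 ≤ N) (t : ℕ → ℝ)
    (ht0 : t 0 = tl) (htN : t N = tu)
    (htmono : ∀ i j : ℕ, i ≤ j → j ≤ N → t i ≤ t j)
    (R : ℝ → Set (EuclideanSpace ℝ (Fin n)))
    (hRcp : ∀ u ∈ Set.Icc tl tu, IsCompact (R u))
    (Λ : ℕ → Set (EuclideanSpace ℝ (Fin n)))
    (hΛne : ∀ i : ℕ, i ≤ N → (Λ i).Nonempty)
    (hΛcp : ∀ i : ℕ, i ≤ N → IsCompact (Λ i))
    (hΛsub : ∀ i : ℕ, i ≤ N → Λ i ⊆ R (t i)) :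
    ∀ C : ℝ, (∀ i : ℕ, i < N → ∀ u ∈ Set.Icc (t i) (t (i + 1)),
        Metric.hausdorffDist (R u) (Λ i) ≤ C) →
      Metric.hausdorffDist (⋃ i ∈ Finset.range (N + 1), Λ i)
        (⋃ u ∈ Set.Icc tl tu, R u) ≤ C := by
  intro C hC
  have htmem : ∀ i ≤ N, t i ∈ Icc tl tu := fun i hi =>
    ⟨ht0 ▸ htmono 0 i i.zero_le hi, htN ▸ htmono i N hi le_rfl⟩
  have hC0 : 0 ≤ C :=
    hausdorffDist_nonneg.trans (hC 0 hN (t 0) ⟨le_rfl, htmono 0 1 zero_le_one hN⟩)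
  have hsub : ⋃ i ∈ Finset.range (N + 1), Λ i ⊆ ⋃ u ∈ Icc tl tu, R u :=
    iUnion₂_subset fun i hi =>
      have hiN : i ≤ N := Nat.lt_succ_iff.1 (Finset.mem_range.1 hi)
      (hΛsub i hiN).trans (subset_biUnion_of_mem (htmem i hiN))
  refine hausdorffDist_le_of_subset_of_infDist_le hsub hC0 fun x hx => ?_
  obtain ⟨u, hu, hxu⟩ := mem_iUnion₂.1 hx
  obtain ⟨i, hiN, hui⟩ :=
    exists_lt_mem_Icc_of_le_of_le hN (ht0 ▸ hu.1) (htN.symm ▸ hu.2)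
  calc infDist x (⋃ i ∈ Finset.range (N + 1), Λ i)
      ≤ infDist x (Λ i) :=
        infDist_le_infDist_of_subset
          (subset_biUnion_of_mem (u := Λ) (Finset.mem_range.2 (by omega))) (hΛne i hiN.le)
    _ ≤ hausdorffDist (R u) (Λ i) :=
        infDist_le_hausdorffDist_of_mem_of_isBounded hxu (hΛne i hiN.le)
          (hRcp u hu).isBounded (hΛcp i hiN.le).isBounded
    _ ≤ C := hC i hiN u hui

/-- If `Λᵢ ⊆ R(tᵢ)` are nonempty compact sets over a partition
`t̲ = t₀ ≤ … ≤ t_N = t̄` and `R` is Hausdorff-continuous with nonempty compact values,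
then `d_H(⋃ᵢ Λᵢ, ⋃_{t∈[t̲,t̄]} R(t)) ≤ max_i sup_{t∈[tᵢ,tᵢ₊₁]} d_H(R(t), Λᵢ)`. -/
theorem hausdorff_dist_union_le {n : ℕ} (tl tu : ℝ) (hle : tl ≤ tu)
    (N : ℕ) (hN : 1 ≤ N) (t : ℕ → ℝ)
    (ht0 : t 0 = tl) (htN : t N = tu)
    (htmono : ∀ i j : ℕ, i ≤ j → j ≤ N → t i ≤ t j)
    (R : ℝ → Set (EuclideanSpace ℝ (Fin n)))
    (hRne : ∀ u ∈ Set.Icc tl tu, (R u).Nonempty)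
    (hRcp : ∀ u ∈ Set.Icc tl tu, IsCompact (R u))
    (hRcont : ∀ ε : ℝ, 0 < ε → ∀ u ∈ Set.Icc tl tu, ∃ δ : ℝ, 0 < δ ∧
      ∀ v ∈ Set.Icc tl tu, |v - u| < δ → Metric.hausdorffDist (R v) (R u) < ε)
    (Λ : ℕ → Set (EuclideanSpace ℝ (Fin n)))
    (hΛne : ∀ i : ℕ, i ≤ N → (Λ i).Nonempty)
    (hΛcp : ∀ i : ℕ, i ≤ N → IsCompact (Λ i))
    (hΛsub : ∀ i : ℕ, i ≤ N → Λ i ⊆ R (t i)) :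
    ∀ C : ℝ, (∀ i : ℕ, i < N → ∀ u ∈ Set.Icc (t i) (t (i + 1)),
        Metric.hausdorffDist (R u) (Λ i) ≤ C) →
      Metric.hausdorffDist (⋃ i ∈ Finset.range (N + 1), Λ i)
        (⋃ u ∈ Set.Icc tl tu, R u) ≤ C :=
  hausdorff_dist_union_le_general tl tu N hN t ht0 htN htmono R hRcp Λ hΛne hΛcp hΛsub
end

section
/- For a compact interval [a,b], nonempty convex compact U ⊆ ℝ^m, and integrable F : [a,b] → ℝ^{n×m}, the Hausdorff distance between the constant-selection set (∫_a^b F(s)ds)·U and the Aumann integral ∫_a^b F(s)U ds is at most ‖U‖·∫_a^b ‖F(s) − avg_{[a,b]}(F)‖ ds, where avg_{[a,b]}(F) = (1/(b−a))∫_a^b F. -/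
open MeasureTheory intervalIntegral

/-! Write `F̄` and `ū` for the means of `F` and of a measurable selection `u` of `U`. Since
`(∫ F) ū = F̄ (∫ u)`, the Aumann point `∫ F(s) u(s) ds` differs from the constant-selection point
`(∫ F) ū` by `∫ (F(s) - F̄) u(s) ds`, of norm at most `‖U‖ ∫ ‖F(s) - F̄‖ ds`; and `ū ∈ U` because
`U` is closed and convex. Conversely, a constant selection is itself admissible in the Aumann
integral. -/

section Norm

variable {E : Type*} [SeminormedAddCommGroup E]

theorem biSup_norm_nonneg (U : Set E) : 0 ≤ ⨆ u ∈ U, ‖u‖ :=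
  Real.iSup_nonneg fun _ => Real.iSup_nonneg fun _ => norm_nonneg _

theorem Bornology.IsBounded.norm_le_biSup_norm {U : Set E} (hU : Bornology.IsBounded U) {v : E}
    (hv : v ∈ U) : ‖v‖ ≤ ⨆ u ∈ U, ‖u‖ := by
  obtain ⟨C, hC⟩ := hU.exists_norm_le
  refine le_ciSup_of_le ⟨max C 0, ?_⟩ v (by rw [ciSup_pos hv])
  rintro _ ⟨w, rfl⟩
  exact Real.iSup_le (fun hw => (hC w hw).trans (le_max_left _ _)) (le_max_right _ _)

end Norm

section Average

variable {α E G : Type*} [MeasurableSpace α] {μ : Measure α}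
  [NormedAddCommGroup E] [NormedSpace ℝ E] [NormedAddCommGroup G] [NormedSpace ℝ G]
  {F : α → E →L[ℝ] G} {u : α → E} {K : ℝ}

theorem integral_apply_average_eq_average_apply_integral :
    (∫ s, F s ∂μ) (⨍ s, u s ∂μ) = (⨍ s, F s ∂μ) (∫ s, u s ∂μ) := by
  simp [average_eq]

theorem MeasureTheory.Integrable.apply_of_norm_le (hF : Integrable F μ)
    (hu : AEStronglyMeasurable u μ) (huK : ∀ᵐ s ∂μ, ‖u s‖ ≤ K) :
    Integrable (fun s => F s (u s)) μ :=
  (hF.norm.mul_const K).mono'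
    (isBoundedBilinearMap_apply.continuous.comp_aestronglyMeasurable₂ hF.1 hu)
    (huK.mono fun s hs => (F s).le_opNorm_of_le hs)

theorem norm_integral_apply_sub_integral_apply_average_le [CompleteSpace E] [CompleteSpace G]
    [IsFiniteMeasure μ] (hF : Integrable F μ) (hu : AEStronglyMeasurable u μ)
    (huK : ∀ᵐ s ∂μ, ‖u s‖ ≤ K) :
    ‖∫ s, F s (u s) ∂μ - (∫ s, F s ∂μ) (⨍ s, u s ∂μ)‖ ≤ K * ∫ s, ‖F s - ⨍ w, F w ∂μ‖ ∂μ := by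
  set A := ⨍ w, F w ∂μ
  have hui : Integrable u μ := (integrable_const K).mono' hu huK
  have hdiff : ∫ s, F s (u s) ∂μ - (∫ s, F s ∂μ) (⨍ s, u s ∂μ) = ∫ s, (F s - A) (u s) ∂μ := by
    rw [integral_apply_average_eq_average_apply_integral, ← A.integral_comp_comm hui,
      ← integral_sub (hF.apply_of_norm_le hu huK) (A.integrable_comp hui)]
    rfl
  rw [hdiff, mul_comm, ← MeasureTheory.integral_mul_const]
  exact norm_integral_le_of_norm_le ((hF.sub (integrable_const A)).norm.mul_const K)
    (huK.mono fun s hs => (F s - A).le_opNorm_of_le hs)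

theorem norm_intervalIntegral_apply_sub_intervalIntegral_apply_average_le [CompleteSpace E]
    [CompleteSpace G] {a b : ℝ} (hab : a ≤ b) {F : ℝ → E →L[ℝ] G}
    (hF : IntervalIntegrable F volume a b) {u : ℝ → E} (hu : AEStronglyMeasurable u)
    (huK : ∀ s, ‖u s‖ ≤ K) :
    ‖(∫ s in a..b, F s (u s)) - (∫ s in a..b, F s) (⨍ s in a..b, u s)‖ ≤
      K * ∫ s in a..b, ‖F s - ⨍ w in a..b, F w‖ := by
  simp only [integral_of_le hab, Set.uIoc_of_le hab]
  exact norm_integral_apply_sub_integral_apply_average_le hF.1 hu.restrict (ae_of_all _ huK)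

theorem Convex.interval_average_mem [CompleteSpace E] {U : Set E} (hU : Convex ℝ U)
    (hUc : IsClosed U) (hUb : Bornology.IsBounded U) {a b : ℝ} (hab : a ≠ b) {u : ℝ → E}
    (hu : AEStronglyMeasurable u) (huU : ∀ s, u s ∈ U) : ⨍ s in a..b, u s ∈ U := by
  obtain ⟨K, hK⟩ := hUb.exists_norm_le
  have hfin : volume (Set.uIoc a b) ≠ ⊤ := by simp [Real.volume_uIoc]
  refine hU.set_average_mem hUc ?_ hfin (ae_of_all _ huU)
    (Measure.integrableOn_of_bounded hfin hu (ae_of_all _ fun s => hK _ (huU s)))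
  simpa [Real.volume_uIoc, sub_eq_zero] using hab.symm

end Average

theorem hausdorff_dist_constant_selection_aumann_general {n m : ℕ} (a b : ℝ) (hab : a < b)
    (U : Set (EuclideanSpace ℝ (Fin m)))
    (hUcp : IsCompact U) (hUcv : Convex ℝ U)
    (F : ℝ → EuclideanSpace ℝ (Fin m) →L[ℝ] EuclideanSpace ℝ (Fin n))
    (hF : IntegrableOn F (Set.Icc a b)) :
    Metric.hausdorffDist
        ((fun u => (∫ s in a..b, F s) u) '' U)
        {y | ∃ u : ℝ → EuclideanSpace ℝ (Fin m), Measurable u ∧ (∀ s, u s ∈ U) ∧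
          y = ∫ s in a..b, F s (u s)}
      ≤ (⨆ u ∈ U, ‖u‖) * ∫ s in a..b, ‖F s - (b - a)⁻¹ • ∫ w in a..b, F w‖ := by
  have hFi : IntervalIntegrable F volume a b :=
    (intervalIntegrable_iff_integrableOn_Icc_of_le hab.le).2 hF
  have hK : ∀ v ∈ U, ‖v‖ ≤ ⨆ u ∈ U, ‖u‖ := fun v hv => hUcp.isBounded.norm_le_biSup_norm hv
  have hr : 0 ≤ (⨆ u ∈ U, ‖u‖) * ∫ s in a..b, ‖F s - (b - a)⁻¹ • ∫ w in a..b, F w‖ :=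
    mul_nonneg (biSup_norm_nonneg U) (integral_nonneg hab.le fun _ _ => norm_nonneg _)
  refine Metric.hausdorffDist_le_of_mem_dist hr ?_ ?_
  · rintro _ ⟨v, hv, rfl⟩
    refine ⟨_, ⟨fun _ => v, measurable_const, fun _ => hv, rfl⟩, ?_⟩
    change dist ((∫ s in a..b, F s) v) (∫ s in a..b, F s v) ≤ _
    rw [ContinuousLinearMap.intervalIntegral_apply hFi, dist_self]
    exact hr
  · rintro _ ⟨u, hum, huU, rfl⟩
    refine ⟨_, ⟨_, hUcv.interval_average_mem hUcp.isClosed hUcp.isBounded hab.ne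
      hum.aestronglyMeasurable huU, rfl⟩, ?_⟩
    rw [dist_eq_norm, ← interval_average_eq F a b]
    exact norm_intervalIntegral_apply_sub_intervalIntegral_apply_average_le hab.le hFi
      hum.aestronglyMeasurable fun s => hK _ (huU s)

/-- The Hausdorff distance between the constant-selection set
`(∫_a^b F)·U` and the Aumann integral `∫_a^b F(s)U ds` is at most
`‖U‖·∫_a^b ‖F(s) − avg_{[a,b]} F‖ ds`. -/
theorem hausdorff_dist_constant_selection_aumann {n m : ℕ} (a b : ℝ) (hab : a < b)
    (U : Set (EuclideanSpace ℝ (Fin m)))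
    (hUne : U.Nonempty) (hUcp : IsCompact U) (hUcv : Convex ℝ U)
    (F : ℝ → EuclideanSpace ℝ (Fin m) →L[ℝ] EuclideanSpace ℝ (Fin n))
    (hF : IntegrableOn F (Set.Icc a b)) :
    Metric.hausdorffDist
        ((fun u => (∫ s in a..b, F s) u) '' U)
        {y | ∃ u : ℝ → EuclideanSpace ℝ (Fin m), Measurable u ∧ (∀ s, u s ∈ U) ∧
          y = ∫ s in a..b, F s (u s)}
      ≤ (⨆ u ∈ U, ‖u‖) * ∫ s in a..b, ‖F s - (b - a)⁻¹ • ∫ w in a..b, F w‖ :=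
  hausdorff_dist_constant_selection_aumann_general a b hab U hUcp hUcv F hF
end
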